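/- Let ω = e^{2πi/3} and let F(x,z,y,w) = w² + y³ − 27wx³ − 3wyz + wz³ on ℂ⁴. The set of singular points of the hypersurface F = 0 (points where F and all four partial derivatives ∂F/∂x, ∂F/∂z, ∂F/∂y, ∂F/∂w vanish) is exactly the union of the four curves {(0, t, t², t³) : t ∈ ℂ}, {(t, 3t, 0, 0) : t ∈ ℂ}, {(t, 3ωt, 0, 0) : t ∈ ℂ}, {(t, 3ω²t, 0, 0) : t ∈ ℂ}, which intersect pairwise only at the origin. -/
import Mathlib

noncomputable section
open MvPolynomial Complex

/-- ω = e^{2πi/3}, a primitive cube root of unity. -/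
def ω : ℂ := Complex.exp (2 * Real.pi * Complex.I / 3)

lemma hprim : IsPrimitiveRoot ω 3 := by
  have := Complex.isPrimitiveRoot_exp 3 (by norm_num)
  have h : ω = Complex.exp (2 * ↑Real.pi * Complex.I / (3:ℕ)) := by
    unfold ω; norm_num
  rw [h]; exact this

lemma hω3 : ω ^ 3 = 1 := hprim.pow_eq_one
lemma hω1 : ω ≠ 1 := hprim.ne_one (by norm_num)
lemma hω0 : ω ≠ 0 := fun h => by simpa [h] using hω3
lemma hsum : 1 + ω + ω ^ 2 = 0 := by
  have h : (ω - 1) * (ω ^ 2 + ω + 1) = 0 := by linear_combination hω3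
  rcases mul_eq_zero.1 h with h | h
  · exact absurd (sub_eq_zero.1 h) hω1
  · linear_combination h
lemma hω21 : ω ^ 2 ≠ 1 := by
  intro h
  apply hω1
  have : ω * ω ^ 2 = 1 := by rw [← hω3]; ring
  rw [h, mul_one] at this; exact this
lemma hωω2 : ω ≠ ω ^ 2 := fun h =>
  hω1 (mul_left_cancel₀ hω0 (by rw [mul_one, ← pow_two, ← h])).symm

/-- F = w² + y³ − 27wx³ − 3wyz + wz³ on ℂ⁴, with coordinates x = p 0, z = p 1,
y = p 2, w = p 3. -/
def Frel : MvPolynomial (Fin 4) ℂ :=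
  X 3 ^ 2 + X 2 ^ 3 - C 27 * X 3 * X 0 ^ 3 - C 3 * X 3 * X 2 * X 1 + X 3 * X 1 ^ 3

/-- The singular locus of the hypersurface F = 0: points where F and all four partial
derivatives vanish. -/
def SingF : Set (Fin 4 → ℂ) :=
  {p | eval p Frel = 0 ∧ ∀ i : Fin 4, eval p (pderiv i Frel) = 0}

/-- The curve (x,z,y,w) = (0, t, t², t³). -/
def Curve₁ : Set (Fin 4 → ℂ) := {p | ∃ t : ℂ, p = ![0, t, t ^ 2, t ^ 3]}
/-- The curve (x,z,y,w) = (t, 3t, 0, 0). -/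
def Curve₂ : Set (Fin 4 → ℂ) := {p | ∃ t : ℂ, p = ![t, 3 * t, 0, 0]}
/-- The curve (x,z,y,w) = (t, 3ωt, 0, 0). -/
def Curve₃ : Set (Fin 4 → ℂ) := {p | ∃ t : ℂ, p = ![t, 3 * ω * t, 0, 0]}
/-- The curve (x,z,y,w) = (t, 3ω²t, 0, 0). -/
def Curve₄ : Set (Fin 4 → ℂ) := {p | ∃ t : ℂ, p = ![t, 3 * ω ^ 2 * t, 0, 0]}

lemma evalF (p : Fin 4 → ℂ) :
    eval p Frel = p 3 ^ 2 + p 2 ^ 3 - 27 * p 3 * p 0 ^ 3 - 3 * p 3 * p 2 * p 1 + p 3 * p 1 ^ 3 := by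
  simp [Frel]

lemma evalD0 (p : Fin 4 → ℂ) : eval p (pderiv 0 Frel) = -81 * p 3 * p 0 ^ 2 := by
  simp [Frel, pderiv_X]; ring
lemma evalD1 (p : Fin 4 → ℂ) : eval p (pderiv 1 Frel) = -3 * p 3 * p 2 + 3 * p 3 * p 1 ^ 2 := by
  simp [Frel, pderiv_X]; ring
lemma evalD2 (p : Fin 4 → ℂ) : eval p (pderiv 2 Frel) = 3 * p 2 ^ 2 - 3 * p 3 * p 1 := by
  simp [Frel, pderiv_X]; ring
lemma evalD3 (p : Fin 4 → ℂ) :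
    eval p (pderiv 3 Frel) = 2 * p 3 - 27 * p 0 ^ 3 - 3 * p 2 * p 1 + p 1 ^ 3 := by
  simp [Frel, pderiv_X]; ring

lemma sing_eq_union : SingF = Curve₁ ∪ Curve₂ ∪ Curve₃ ∪ Curve₄ := by
  ext p
  simp only [SingF, Curve₁, Curve₂, Curve₃, Curve₄, Set.mem_setOf_eq, Set.mem_union]
  constructor
  · rintro ⟨hF, hD⟩
    have h0 := hD 0; have h1 := hD 1; have h2 := hD 2; have h3 := hD 3
    rw [evalD0] at h0; rw [evalD1] at h1; rw [evalD2] at h2; rw [evalD3] at h3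
    rw [evalF] at hF
    by_cases hw : p 3 = 0
    · -- w = 0 : y = 0, z³ = 27 x³
      have hy : p 2 = 0 := by
        have : p 2 ^ 2 = 0 := by linear_combination (1/3 : ℂ) * h2 + (p 1) * hw
        exact pow_eq_zero_iff (by norm_num) |>.1 this
      have hz3 : (p 1 - 3 * p 0) * (p 1 - 3 * ω * p 0) * (p 1 - 3 * ω ^ 2 * p 0) = 0 := by
        linear_combination h3 - 2 * hw + 3 * p 1 * hy +
          (-3 * p 0 * p 1 ^ 2 + 9 * p 1 * p 0 ^ 2) * hsum +
          (9 * p 1 * p 0 ^ 2 - 27 * p 0 ^ 3) * hω3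
      have hmem : ∀ c : ℂ, p 1 = 3 * c * p 0 → p = ![p 0, 3 * c * p 0, 0, 0] := by
        intro c hc
        funext i
        fin_cases i <;> simp [← hc, hy, hw]
      rcases mul_eq_zero.1 hz3 with h | h
      · rcases mul_eq_zero.1 h with h | h
        · exact Or.inl (Or.inl (Or.inr ⟨p 0, by
            have := hmem 1 (by linear_combination h); simpa using this⟩))
        · exact Or.inl (Or.inr ⟨p 0, hmem ω (by linear_combination h)⟩)
      · exact Or.inr ⟨p 0, hmem (ω ^ 2) (by linear_combination h)⟩
    · -- w ≠ 0 : x = 0, y = z², w = z³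
      have hx : p 0 = 0 := by
        have : p 3 * p 0 ^ 2 = 0 := by linear_combination (-1/81 : ℂ) * h0
        have := (mul_eq_zero.1 this).resolve_left hw
        exact pow_eq_zero_iff (by norm_num) |>.1 this
      have hy : p 2 = p 1 ^ 2 := by
        have : p 3 * (p 1 ^ 2 - p 2) = 0 := by linear_combination (1/3 : ℂ) * h1
        have := (mul_eq_zero.1 this).resolve_left hw
        linear_combination -this
      have hw3 : p 3 = p 1 ^ 3 := by
        linear_combination (1/2 : ℂ) * h3 + (27/2 : ℂ) * p 0 ^ 2 * hx +
          (3/2 : ℂ) * p 1 * hy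
      exact Or.inl (Or.inl (Or.inl ⟨p 1, by funext i; fin_cases i <;> simp [hx, hy, hw3]⟩))
  · rintro (((⟨t, rfl⟩ | ⟨t, rfl⟩) | ⟨t, rfl⟩) | ⟨t, rfl⟩)
    · refine ⟨by rw [evalF]; simp; ring, fun i => ?_⟩
      fin_cases i
      · show eval _ (pderiv 0 Frel) = 0
        rw [evalD0]; simp
      · show eval _ (pderiv 1 Frel) = 0
        rw [evalD1]; simp
      · show eval _ (pderiv 2 Frel) = 0
        rw [evalD2]; simp; ring
      · show eval _ (pderiv 3 Frel) = 0
        rw [evalD3]; simp; ring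
    · refine ⟨by rw [evalF]; simp, fun i => ?_⟩
      fin_cases i
      · show eval _ (pderiv 0 Frel) = 0
        rw [evalD0]; simp
      · show eval _ (pderiv 1 Frel) = 0
        rw [evalD1]; simp
      · show eval _ (pderiv 2 Frel) = 0
        rw [evalD2]; simp
      · show eval _ (pderiv 3 Frel) = 0
        rw [evalD3]; simp; ring
    · refine ⟨by rw [evalF]; simp, fun i => ?_⟩
      fin_cases i
      · show eval _ (pderiv 0 Frel) = 0
        rw [evalD0]; simp
      · show eval _ (pderiv 1 Frel) = 0
        rw [evalD1]; simp
      · show eval _ (pderiv 2 Frel) = 0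
        rw [evalD2]; simp
      · show eval _ (pderiv 3 Frel) = 0
        rw [evalD3]; simp; linear_combination (27:ℂ) * t ^ 3 * hω3
    · refine ⟨by rw [evalF]; simp, fun i => ?_⟩
      fin_cases i
      · show eval _ (pderiv 0 Frel) = 0
        rw [evalD0]; simp
      · show eval _ (pderiv 1 Frel) = 0
        rw [evalD1]; simp
      · show eval _ (pderiv 2 Frel) = 0
        rw [evalD2]; simp
      · show eval _ (pderiv 3 Frel) = 0
        rw [evalD3]; simp; linear_combination ((27:ℂ) * t ^ 3 + 27 * t ^ 3 * ω ^ 3) * hω3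

lemma zero_mem_aux (c : ℂ) : (0 : Fin 4 → ℂ) = ![(0:ℂ), 3 * c * 0, 0, 0] := by
  funext i; fin_cases i <;> simp

lemma zero_mem₁ : (0 : Fin 4 → ℂ) = ![(0:ℂ), 0, 0 ^ 2, 0 ^ 3] := by
  funext i; fin_cases i <;> simp

lemma c12 : Curve₁ ∩ Curve₂ = {0} := by
  ext p
  simp only [Curve₁, Curve₂, Set.mem_inter_iff, Set.mem_setOf_eq, Set.mem_singleton_iff]
  constructor
  · rintro ⟨⟨t, rfl⟩, ⟨s, hs⟩⟩
    have h2 := congrFun hs 2; simp at h2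
    have ht : t = 0 := h2
    funext i; fin_cases i <;> simp [ht]
  · rintro rfl
    exact ⟨⟨0, zero_mem₁⟩, ⟨0, by simpa using zero_mem_aux 1⟩⟩

lemma c13 : Curve₁ ∩ Curve₃ = {0} := by
  ext p
  simp only [Curve₁, Curve₃, Set.mem_inter_iff, Set.mem_setOf_eq, Set.mem_singleton_iff]
  constructor
  · rintro ⟨⟨t, rfl⟩, ⟨s, hs⟩⟩
    have h2 := congrFun hs 2; simp at h2
    have ht : t = 0 := h2
    funext i; fin_cases i <;> simp [ht]
  · rintro rfl
    exact ⟨⟨0, zero_mem₁⟩, ⟨0, zero_mem_aux ω⟩⟩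

lemma c14 : Curve₁ ∩ Curve₄ = {0} := by
  ext p
  simp only [Curve₁, Curve₄, Set.mem_inter_iff, Set.mem_setOf_eq, Set.mem_singleton_iff]
  constructor
  · rintro ⟨⟨t, rfl⟩, ⟨s, hs⟩⟩
    have h2 := congrFun hs 2; simp at h2
    have ht : t = 0 := h2
    funext i; fin_cases i <;> simp [ht]
  · rintro rfl
    exact ⟨⟨0, zero_mem₁⟩, ⟨0, zero_mem_aux (ω ^ 2)⟩⟩

lemma c23 : Curve₂ ∩ Curve₃ = {0} := by
  ext p
  simp only [Curve₂, Curve₃, Set.mem_inter_iff, Set.mem_setOf_eq, Set.mem_singleton_iff]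
  constructor
  · rintro ⟨⟨t, rfl⟩, ⟨s, hs⟩⟩
    have h0 := congrFun hs 0; simp at h0
    have h1 := congrFun hs 1; simp at h1
    have ht : t = 0 := by
      rcases mul_eq_zero.1 (show (1 - ω) * t = 0 by
        linear_combination (1/3 : ℂ) * h1 - ω * h0) with h | h
      · exact absurd (by linear_combination h) hω1.symm
      · exact h
    funext i; fin_cases i <;> simp [ht]
  · rintro rfl
    exact ⟨⟨0, by simpa using zero_mem_aux 1⟩, ⟨0, zero_mem_aux ω⟩⟩

lemma c24 : Curve₂ ∩ Curve₄ = {0} := by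
  ext p
  simp only [Curve₂, Curve₄, Set.mem_inter_iff, Set.mem_setOf_eq, Set.mem_singleton_iff]
  constructor
  · rintro ⟨⟨t, rfl⟩, ⟨s, hs⟩⟩
    have h0 := congrFun hs 0; simp at h0
    have h1 := congrFun hs 1; simp at h1
    have ht : t = 0 := by
      rcases mul_eq_zero.1 (show (1 - ω ^ 2) * t = 0 by
        linear_combination (1/3 : ℂ) * h1 - ω ^ 2 * h0) with h | h
      · exact absurd (by linear_combination h) hω21.symm
      · exact h
    funext i; fin_cases i <;> simp [ht]
  · rintro rfl
    exact ⟨⟨0, by simpa using zero_mem_aux 1⟩, ⟨0, zero_mem_aux (ω ^ 2)⟩⟩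

lemma c34 : Curve₃ ∩ Curve₄ = {0} := by
  ext p
  simp only [Curve₃, Curve₄, Set.mem_inter_iff, Set.mem_setOf_eq, Set.mem_singleton_iff]
  constructor
  · rintro ⟨⟨t, rfl⟩, ⟨s, hs⟩⟩
    have h0 := congrFun hs 0; simp at h0
    have h1 := congrFun hs 1; simp at h1
    have ht : t = 0 := by
      rcases mul_eq_zero.1 (show (ω - ω ^ 2) * t = 0 by
        linear_combination (1/3 : ℂ) * h1 - ω ^ 2 * h0) with h | h
      · exact absurd (sub_eq_zero.1 h) hωω2
      · exact h
    funext i; fin_cases i <;> simp [ht]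
  · rintro rfl
    exact ⟨⟨0, zero_mem_aux ω⟩, ⟨0, zero_mem_aux (ω ^ 2)⟩⟩

/-- The singular locus of w² + y³ − 27wx³ − 3wyz + wz³ = 0 in ℂ⁴ is exactly the union
of the four curves, and these curves intersect pairwise only at the origin. -/
theorem singular_locus_of_F :
    SingF = Curve₁ ∪ Curve₂ ∪ Curve₃ ∪ Curve₄ ∧
    (∀ S ∈ ({Curve₁, Curve₂, Curve₃, Curve₄} : Set (Set (Fin 4 → ℂ))),
      ∀ T ∈ ({Curve₁, Curve₂, Curve₃, Curve₄} : Set (Set (Fin 4 → ℂ))),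
        S ≠ T → S ∩ T = {0}) := by
  refine ⟨sing_eq_union, ?_⟩
  intro S hS T hT hne
  simp only [Set.mem_insert_iff, Set.mem_singleton_iff] at hS hT
  rcases hS with rfl | rfl | rfl | rfl <;> rcases hT with rfl | rfl | rfl | rfl <;>
    first
      | exact absurd rfl hne
      | exact c12 | exact c13 | exact c14 | exact c23 | exact c24 | exact c34
      | (rw [Set.inter_comm];
         first | exact c12 | exact c13 | exact c14 | exact c23 | exact c24 | exact c34)
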